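/- arXiv:1009.3678 — 9 statements merged into one kernel-verified Lean document; each statement's English description precedes it below -/
import Mathlib

section
/- Let H be a complex Hilbert space, let S be an isometry on H, and for each prime p let V_p be an isometry on H, such that: (T1) V_pS = S^pV_p for all primes p; (T2) V_pV_q = V_qV_p for all primes p, q; (T3) V_p*V_q = V_qV_p* for distinct primes p, q; (T4) S*V_p = S^{p-1}V_pS* for all primes p; (T5) V_p*S^kV_p = 0 for all primes p and 1 ≤ k < p. For (m,a) ∈ ℕ⋊ℕ× set W_{(m,a)} := S^m V_{p_1}^{e_{p_1}(a)} ⋯ V_{p_r}^{e_{p_r}(a)}, where p_1 < ⋯ < p_r are the primes dividing a and e_p(a) is the exponent of p in the prime factorisation of a. Suppose that for every finite set F of primes, (1 − SS*) ∏_{p∈F} ∏_{k=0}^{p−1} (1 − S^kV_pV_p*S^{*k}) ≠ 0. Then for every finite subset E of (ℕ⋊ℕ×) \ {(0,1)} and every enumeration (m_1,a_1), …, (m_r,a_r) of E, the operator ∏_{i=1}^{r} (1 − W_{(m_i,a_i)}W_{(m_i,a_i)}*) is nonzero. -/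
open ContinuousLinearMap

section StarAlg

variable {A : Type*} [Ring A] [StarRing A]

/-- trailing form of an equation -/
private lemma tmul {a b : A} (h : a = b) (x : A) : a * x = b * x := by rw [h]

private lemma hSt {S : A} (hS : star S * S = 1) (x : A) : star S * (S * x) = x := by
  rw [← mul_assoc, hS, one_mul]

private lemma hSkt {S : A} (hS : star S * S = 1) : ∀ k (x : A),
    (star S) ^ k * (S ^ k * x) = x := by
  intro k
  induction k with
  | zero => intro x; simp
  | succ n ih =>
    intro x
    rw [pow_succ, pow_succ']
    simp only [mul_assoc]
    rw [hSt hS]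
    exact ih x

/-- V * S^t = S^(r t) * V, trailing form -/
private lemma vS {S V : A} {r : ℕ} (h1 : V * S = S ^ r * V) :
    ∀ t (x : A), V * (S ^ t * x) = S ^ (r * t) * (V * x) := by
  have h1t : ∀ x : A, V * (S * x) = S ^ r * (V * x) := by
    intro x; rw [← mul_assoc, h1, mul_assoc]
  intro t
  induction t with
  | zero => intro x; simp
  | succ n ih =>
    intro x
    rw [pow_succ, Nat.mul_succ, pow_add]
    simp only [mul_assoc]
    rw [ih (S * x), h1t (x)]

/-- (star S)^s * V = S^(r-s) * (V * star S), trailing form, for 1 ≤ s ≤ r -/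
private lemma sV {S V : A} {r : ℕ} (hS : star S * S = 1)
    (h4 : star S * V = S ^ (r - 1) * (V * star S)) :
    ∀ s, 1 ≤ s → s ≤ r → ∀ x : A,
      (star S) ^ s * (V * x) = S ^ (r - s) * (V * (star S * x)) := by
  have h4t : ∀ x : A, star S * (V * x) = S ^ (r - 1) * (V * (star S * x)) := by
    intro x; rw [← mul_assoc, h4]; simp only [mul_assoc]
  intro s
  induction s with
  | zero => omega
  | succ n ih =>
    intro h1 h2 x
    rcases Nat.eq_zero_or_pos n with rfl | hn
    · rw [pow_one]; exact h4t x
    · have hn2 : n ≤ r := by omega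
      rw [pow_succ']
      simp only [mul_assoc]
      rw [ih hn hn2 x]
      have hr : r - n = (r - (n + 1)) + 1 := by omega
      rw [hr, pow_succ']
      simp only [mul_assoc]
      rw [hSt hS]

end StarAlg

section StarAlg2
set_option linter.unusedSectionVars false

variable {A : Type*} [Ring A] [StarRing A]
variable {S V : A} {r : ℕ}

/-- (star S)^r * (V * x) = V * (star S * x) -/
private lemma c2t (hS : star S * S = 1) (hr : 1 ≤ r)
    (h4 : star S * V = S ^ (r - 1) * (V * star S)) (x : A) :
    (star S) ^ r * (V * x) = V * (star S * x) := by
  have := sV hS h4 r hr le_rfl x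
  simpa using this

private lemma c2 (hS : star S * S = 1) (hr : 1 ≤ r)
    (h4 : star S * V = S ^ (r - 1) * (V * star S)) :
    (star S) ^ r * V = V * star S := by
  have := c2t hS hr h4 1
  simpa using this

/-- star V * S^r = S * star V -/
private lemma d3 (hS : star S * S = 1) (hr : 1 ≤ r)
    (h4 : star S * V = S ^ (r - 1) * (V * star S)) :
    star V * S ^ r = S * star V := by
  have := congrArg star (c2 hS hr h4)
  simpa [star_mul, star_pow] using this

private lemma d3t (hS : star S * S = 1) (hr : 1 ≤ r)
    (h4 : star S * V = S ^ (r - 1) * (V * star S)) (x : A) :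
    star V * (S ^ r * x) = S * (star V * x) := by
  rw [← mul_assoc, d3 hS hr h4, mul_assoc]

private lemma d4t (hS : star S * S = 1) (hr : 1 ≤ r)
    (h4 : star S * V = S ^ (r - 1) * (V * star S)) :
    ∀ t (x : A), star V * (S ^ (r * t) * x) = S ^ t * (star V * x) := by
  intro t
  induction t with
  | zero => intro x; simp
  | succ n ih =>
    intro x
    rw [Nat.mul_succ, pow_add, pow_succ]
    simp only [mul_assoc]
    rw [ih (S ^ r * x), d3t hS hr h4 x]

/-- star V * S^s = S * (star V * (star S)^(r-s)) , 1 ≤ s ≤ r, trailing -/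
private lemma d5t (hS : star S * S = 1)
    (h4 : star S * V = S ^ (r - 1) * (V * star S))
    (s : ℕ) (h1 : 1 ≤ s) (h2 : s ≤ r) (x : A) :
    star V * (S ^ s * x) = S * (star V * ((star S) ^ (r - s) * x)) := by
  have core : (star S) ^ s * V = S ^ (r - s) * (V * star S) := by
    have := sV hS h4 s h1 h2 1
    simpa using this
  have core5 : star V * S ^ s = S * (star V * (star S) ^ (r - s)) := by
    have := congrArg star core
    simp only [star_mul, star_pow, star_star] at this
    rw [this]
    simp only [mul_assoc]
  rw [← mul_assoc, core5]
  simp only [mul_assoc]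

/-- star V * (star S)^r = star S * star V, trailing -/
private lemma d6t (h1 : V * S = S ^ r * V) (x : A) :
    star V * ((star S) ^ r * x) = star S * (star V * x) := by
  have core : star V * (star S) ^ r = star S * star V := by
    have := congrArg star h1
    simpa [star_mul, star_pow] using this.symm
  rw [← mul_assoc, core, mul_assoc]

/-- (star S)^t * star V = star V * (star S)^(r t), trailing -/
private lemma d1st (h1 : V * S = S ^ r * V) (t : ℕ) (x : A) :
    (star S) ^ t * (star V * x) = star V * ((star S) ^ (r * t) * x) := by
  have core : (star S) ^ t * star V = star V * (star S) ^ (r * t) := by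
    have hv := vS h1 t 1
    simp only [mul_one] at hv
    have := congrArg star hv
    simpa [star_mul, star_pow] using this
  rw [← mul_assoc, core, mul_assoc]

/-- (star S)^(r m) * (V * x) = V * ((star S)^m * x) -/
private lemma d90t (hS : star S * S = 1) (hr : 1 ≤ r)
    (h4 : star S * V = S ^ (r - 1) * (V * star S)) :
    ∀ m (x : A), (star S) ^ (r * m) * (V * x) = V * ((star S) ^ m * x) := by
  intro m
  induction m with
  | zero => intro x; simp
  | succ n ih =>
    intro x
    rw [Nat.mul_succ, pow_add, pow_succ]
    simp only [mul_assoc]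
    rw [c2t hS hr h4 x, ih (star S * x)]

/-- (star S)^w * (V * x) = S^a * (V * ((star S)^m * x)) when w + a = r*m, a < r -/
private lemma d9t (hS : star S * S = 1)
    (h4 : star S * V = S ^ (r - 1) * (V * star S))
    (w a m : ℕ) (ha : a < r) (hm : w + a = r * m) (x : A) :
    (star S) ^ w * (V * x) = S ^ a * (V * ((star S) ^ m * x)) := by
  have hr : 1 ≤ r := by omega
  rcases Nat.eq_zero_or_pos a with rfl | hapos
  · have hw : w = r * m := by omega
    rw [hw, d90t hS hr h4 m x]
    simp
  · have hm1 : 1 ≤ m := by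
      rcases Nat.eq_zero_or_pos m with rfl | h
      · omega
      · exact h
    set s : ℕ := r - a with hs
    have hs1 : 1 ≤ s := by omega
    have hs2 : s ≤ r := by omega
    have hw : w = s + r * (m - 1) := by
      have : r * m = r * (m - 1) + r := by
        conv_lhs => rw [show m = (m - 1) + 1 by omega]
        rw [Nat.mul_succ]
      omega
    rw [hw, pow_add]
    simp only [mul_assoc]
    rw [d90t hS hr h4 (m - 1) x, sV hS h4 s hs1 hs2]
    have hra : r - s = a := by omega
    rw [hra]
    have hmm : (m - 1) + 1 = m := by omega
    have : star S * ((star S) ^ (m - 1) * x) = (star S) ^ m * x := by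
      rw [← mul_assoc, ← pow_succ', hmm]
    rw [this]

end StarAlg2

section MSec
set_option linter.unusedSectionVars false

variable {A : Type*} [Ring A] [StarRing A]

private lemma Mlem {S Vp Vq : A} {p q : ℕ}
    (hS : star S * S = 1) (hp : p.Prime) (hq1 : 1 ≤ q) (hpq : ¬ p ∣ q)
    (hT1p : Vp * S = S ^ p * Vp) (hT4p : star S * Vp = S ^ (p - 1) * (Vp * star S))
    (hT1q : Vq * S = S ^ q * Vq) (hT4q : star S * Vq = S ^ (q - 1) * (Vq * star S))
    (hT2 : Vp * Vq = Vq * Vp) (hT3 : star Vp * Vq = Vq * star Vp) :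
    ∀ v n u, u < p → n + q * u = p * v → ∀ x : A,
      star Vp * (S ^ n * (Vq * (star Vq * ((star S) ^ n * x)))) =
      S ^ v * (Vq * (star Vq * ((star S) ^ v * (star Vp * x)))) := by
  have hp1 : 1 ≤ p := hp.pos
  have hT3s : ∀ x : A, star Vp * (star Vq * x) = star Vq * (star Vp * x) := by
    intro x
    have core : star Vp * star Vq = star Vq * star Vp := by
      have := congrArg star hT2
      simpa [star_mul] using this.symm
    rw [← mul_assoc, core, mul_assoc]
  have hT3t : ∀ x : A, star Vp * (Vq * x) = Vq * (star Vp * x) := by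
    intro x; rw [← mul_assoc, hT3, mul_assoc]
  intro v
  induction v using Nat.strong_induction_on with
  | _ v ih =>
    intro n u hu huv x
    rcases Nat.eq_zero_or_pos v with rfl | hv
    · have hn : n = 0 := by omega
      subst hn
      simp only [pow_zero, one_mul]
      rw [hT3t, hT3s]
    · -- v ≥ 1
      rcases Nat.lt_or_ge n p with hnp | hnp
      · -- n < p
        rcases Nat.eq_zero_or_pos n with rfl | hn1
        · -- n = 0 : contradiction
          exfalso
          have hdvd : p ∣ q * u := ⟨v, by omega⟩
          rcases (Nat.Prime.dvd_mul hp).mp hdvd with h | h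
          · exact hpq h
          · have hu0 : u = 0 := Nat.eq_zero_of_dvd_of_lt h hu
            subst hu0
            have hpv : 0 < p * v := Nat.mul_pos hp1 hv
            simp at huv
            omega
        · -- 1 ≤ n < p
          obtain ⟨w, hw⟩ : ∃ w, n + w = p := ⟨p - n, by omega⟩
          obtain ⟨a, m, ha, hm⟩ : ∃ a m, a < q ∧ w + a = q * m := by
            have h1 := Nat.div_add_mod w q
            have h2 : w % q < q := Nat.mod_lt _ (by omega)
            by_cases h : w % q = 0
            · exact ⟨0, w / q, by omega, by omega⟩
            · refine ⟨q - w % q, w / q + 1, by omega, ?_⟩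
              rw [Nat.mul_add, Nat.mul_one]
              omega
          have hm1 : 1 ≤ m := by
            rcases Nat.eq_zero_or_pos m with rfl | h
            · omega
            · exact h
          have hu_ge : m ≤ u := by
            by_contra hc
            push_neg at hc
            have h1 : u ≤ m - 1 := by omega
            have h2 : q * u ≤ q * (m - 1) := Nat.mul_le_mul_left q h1
            have h3 : q * m = q * (m - 1) + q := by
              conv_lhs => rw [show m = (m - 1) + 1 by omega]
              rw [Nat.mul_succ]
            have h4 : p * v = p * (v - 1) + p := by
              conv_lhs => rw [show v = (v - 1) + 1 by omega]
              rw [Nat.mul_succ]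
            omega
          obtain ⟨u', rfl⟩ : ∃ u', u = m + u' := ⟨u - m, by omega⟩
          have hqu : q * (m + u') = q * m + q * u' := Nat.mul_add q m u'
          have huv' : a + q * u' = p * (v - 1) := by
            have h4 : p * v = p * (v - 1) + p := by
              conv_lhs => rw [show v = (v - 1) + 1 by omega]
              rw [Nat.mul_succ]
            omega
          have hu'lt : u' < p := by omega
          -- derivation
          have step1 : ∀ y : A, star Vp * (S ^ n * y)
              = S * (star Vp * ((star S) ^ w * y)) := by
            intro y
            have h5 := d5t hS hT4p n hn1 (by omega) y
            rwa [show p - n = w from by omega] at h5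
          rw [step1]
          rw [d9t hS hT4q w a m ha hm]
          rw [d1st hT1q m]
          have hpow : (star S) ^ (q * m) * ((star S) ^ n * x)
              = (star S) ^ a * ((star S) ^ p * x) := by
            have hexp : q * m + n = a + p := by omega
            rw [← mul_assoc, ← mul_assoc, ← pow_add, ← pow_add, hexp]
          rw [hpow]
          rw [ih (v - 1) (by omega) a u' hu'lt huv' ((star S) ^ p * x)]
          rw [d6t hT1p]
          have e1 : S * (S ^ (v - 1) * (Vq * (star Vq * ((star S) ^ (v - 1) *
              (star S * (star Vp * x))))))
              = S ^ v * (Vq * (star Vq * ((star S) ^ v * (star Vp * x)))) := by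
            rw [← mul_assoc S, ← pow_succ']
            rw [show (star S) ^ (v - 1) * (star S * (star Vp * x))
                = (star S) ^ v * (star Vp * x) by
              rw [← mul_assoc, ← pow_succ]
              congr 2
              omega]
            congr 2
            omega
          rw [e1]
      · -- n ≥ p
        have hrec : n - p + q * u = p * (v - 1) := by
          have h4 : p * v = p * (v - 1) + p := by
            conv_lhs => rw [show v = (v - 1) + 1 by omega]
            rw [Nat.mul_succ]
          omega
        have hsplit : S ^ n = S ^ p * S ^ (n - p) := by
          rw [← pow_add]; congr 1; omega
        have hsplit' : (star S) ^ n = (star S) ^ (n - p) * (star S) ^ p := by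
          rw [← pow_add]; congr 1; omega
        rw [hsplit, hsplit']
        simp only [mul_assoc]
        rw [d3t hS hp1 hT4p]
        rw [ih (v - 1) (by omega) (n - p) u hu hrec ((star S) ^ p * x)]
        rw [d6t hT1p]
        rw [← mul_assoc S, ← pow_succ']
        rw [show (star S) ^ (v - 1) * (star S * (star Vp * x))
            = (star S) ^ v * (star Vp * x) by
          rw [← mul_assoc, ← pow_succ]
          congr 2
          omega]
        congr 2
        omega

end MSec

section KSec
set_option linter.unusedSectionVars false

private lemma crt (p q j : ℕ) (hp : p.Prime) (hpq : ¬ p ∣ q) :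
    ∃ u v, u < p ∧ j + q * u = p * v := by
  haveI : Fact p.Prime := ⟨hp⟩
  set u : ZMod p := -(j : ZMod p) * (q : ZMod p)⁻¹ with hu
  have hq0 : (q : ZMod p) ≠ 0 := by
    rwa [Ne, ZMod.natCast_eq_zero_iff]
  have hz : ((j + q * u.val : ℕ) : ZMod p) = 0 := by
    push_cast
    rw [ZMod.natCast_zmod_val, hu]
    field_simp
    ring
  have hdvd : p ∣ j + q * u.val := by
    rwa [ZMod.natCast_eq_zero_iff] at hz
  obtain ⟨v, hv⟩ := hdvd
  exact ⟨u.val, v, ZMod.val_lt u, hv⟩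

variable {A : Type*} [Ring A] [StarRing A]

/-- cross-prime commutation of range projections -/
private lemma Ecross {S Vp Vq : A} {p q : ℕ}
    (hS : star S * S = 1) (hp : p.Prime) (hq : q.Prime) (hne : p ≠ q)
    (hT1p : Vp * S = S ^ p * Vp) (hT4p : star S * Vp = S ^ (p - 1) * (Vp * star S))
    (hT1q : Vq * S = S ^ q * Vq) (hT4q : star S * Vq = S ^ (q - 1) * (Vq * star S))
    (hT2 : Vp * Vq = Vq * Vp) (hT3 : star Vp * Vq = Vq * star Vp) (j : ℕ) :
    Commute (Vp * star Vp) (S ^ j * Vq * star Vq * (star S) ^ j) := by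
  have hpq : ¬ p ∣ q := by
    intro h
    exact hne ((Nat.prime_dvd_prime_iff_eq hp hq).mp h)
  obtain ⟨u, v, hu, huv⟩ := crt p q j hp hpq
  have hM := Mlem hS hp hq.pos hpq hT1p hT4p hT1q hT4q hT2 hT3 v j u hu huv 1
  simp only [mul_one] at hM
  show _ * _ = _ * _
  have h1 : (Vp * star Vp) * (S ^ j * Vq * star Vq * (star S) ^ j)
      = Vp * (S ^ v * (Vq * (star Vq * ((star S) ^ v * star Vp)))) := by
    simp only [mul_assoc]
    rw [hM]
  have h2 : (S ^ j * Vq * star Vq * (star S) ^ j) * (Vp * star Vp)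
      = star ((Vp * star Vp) * (S ^ j * Vq * star Vq * (star S) ^ j)) := by
    simp only [star_mul, star_star, star_pow, mul_assoc]
  have h3 : star (Vp * (S ^ v * (Vq * (star Vq * ((star S) ^ v * star Vp)))))
      = Vp * (S ^ v * (Vq * (star Vq * ((star S) ^ v * star Vp)))) := by
    simp only [star_mul, star_star, star_pow, mul_assoc]
  rw [h1, h2, h1, h3]

/-- S S* commutes with the range projections -/
private lemma Ess {S Vq : A} {q : ℕ}
    (hS : star S * S = 1) (hq : 1 ≤ q)
    (hT1q : Vq * S = S ^ q * Vq) (hT4q : star S * Vq = S ^ (q - 1) * (Vq * star S))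
    (k : ℕ) :
    Commute (S * star S) (S ^ k * Vq * star Vq * (star S) ^ k) := by
  show _ * _ = _ * _
  rcases Nat.eq_zero_or_pos k with rfl | hk
  · simp only [pow_zero, one_mul, mul_one]
    have core : star S * star Vq = star Vq * (star S) ^ q := by
      have := congrArg star hT1q
      simpa [star_mul, star_pow] using this
    have hT4qt : ∀ x : A, star S * (Vq * x) = S ^ (q - 1) * (Vq * (star S * x)) := by
      intro x; rw [← mul_assoc, hT4q]; simp only [mul_assoc]
    have hse : (star S : A) ^ (q - 1) * star S = (star S) ^ q := by
      rw [← pow_succ]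
      congr 1
      omega
    have hL : (S * star S) * (Vq * star Vq) = S ^ q * (Vq * (star Vq * (star S) ^ q)) := by
      simp only [mul_assoc]
      rw [hT4qt, core]
      rw [← mul_assoc S, ← pow_succ', show q - 1 + 1 = q from by omega]
    have hR : (Vq * star Vq) * (S * star S) = S ^ q * (Vq * (star Vq * (star S) ^ q)) := by
      simp only [mul_assoc]
      have h5 := d5t hS hT4q 1 le_rfl hq (star S)
      rw [pow_one] at h5
      rw [h5, hse]
      have hv1 := vS hT1q 1 (star Vq * (star S) ^ q)
      rw [pow_one, Nat.mul_one] at hv1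
      rw [hv1]
    rw [hL, hR]
  · -- k ≥ 1 : both sides equal the middle term
    have hL : (S * star S) * (S ^ k * Vq * star Vq * (star S) ^ k)
        = S ^ k * Vq * star Vq * (star S) ^ k := by
      conv_lhs => rw [show k = (k - 1) + 1 by omega]
      simp only [pow_succ', mul_assoc]
      rw [hSt hS]
      conv_rhs => rw [show k = (k - 1) + 1 by omega]
      simp only [pow_succ', mul_assoc]
    have hR : (S ^ k * Vq * star Vq * (star S) ^ k) * (S * star S)
        = S ^ k * Vq * star Vq * (star S) ^ k := by
      conv_lhs => rw [show k = (k - 1) + 1 by omega]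
      conv_rhs => rw [show k = (k - 1) + 1 by omega]
      simp only [pow_succ, mul_assoc]
      rw [hSt hS]
    rw [hL, hR]

/-- same prime orthogonality: E_{p,0} * E_{p,k} = 0 and E_{p,k} * E_{p,0} = 0, 1 ≤ k < p -/
private lemma Eorth {S Vp : A} {p : ℕ}
    (hS : star S * S = 1) (hp1 : 1 ≤ p)
    (hT4p : star S * Vp = S ^ (p - 1) * (Vp * star S))
    (hT5p : ∀ k, 1 ≤ k → k < p → star Vp * (S ^ k * Vp) = 0)
    (k : ℕ) (hk1 : 1 ≤ k) (hkp : k < p) :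
    Commute (Vp * star Vp) (S ^ k * Vp * star Vp * (star S) ^ k) := by
  have hT5t : ∀ m, 1 ≤ m → m < p → ∀ x : A, star Vp * (S ^ m * (Vp * x)) = 0 := by
    intro m h1 h2 x
    have : star Vp * (S ^ m * (Vp * x)) = (star Vp * (S ^ m * Vp)) * x := by
      simp only [mul_assoc]
    rw [this, hT5p m h1 h2, zero_mul]
  show _ * _ = _ * _
  have hL : (Vp * star Vp) * (S ^ k * Vp * star Vp * (star S) ^ k) = 0 := by
    simp only [mul_assoc]
    rw [hT5t k hk1 hkp, mul_zero]
  have hR : (S ^ k * Vp * star Vp * (star S) ^ k) * (Vp * star Vp) = 0 := by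
    simp only [mul_assoc]
    rw [sV hS hT4p k hk1 (by omega)]
    rw [hT5t (p - k) (by omega) (by omega)]
    simp only [mul_zero]
  rw [hL, hR]

end KSec

section MainSec
set_option linter.unusedSectionVars false
variable {A : Type*} [Ring A] [StarRing A]

private lemma comm_one_sub {a b : A} (h : Commute a b) : Commute (1 - a) (1 - b) :=
  (Commute.one_left _).sub_left ((Commute.one_right a).sub_right h)

end MainSec


/-- Given isometries `S` and `V_p` (one for each prime `p`) on a complex
Hilbert space satisfying the relations (T1)–(T5) of Laca–Raeburn, and satisfying the
non-vanishing condition (2.3), the products `∏ (1 - W_{(m,a)} W_{(m,a)}*)` over any finite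
subset `E` of `(ℕ⋊ℕ×) \ {(0,1)}` (given by any enumeration of `E`) are nonzero.
Here `W_{(m,a)} = S^m V_{p₁}^{e_{p₁}(a)} ⋯ V_{p_r}^{e_{p_r}(a)}`, which we encode as
`S^m * ((a.primeFactorsList).map V).prod`, the list of prime factors of `a` being sorted in
increasing order with multiplicities. -/
theorem stmt0 {H : Type*} [NormedAddCommGroup H] [InnerProductSpace ℂ H] [CompleteSpace H]
    (S : H →L[ℂ] H) (hS : adjoint S * S = 1)
    (V : ℕ → H →L[ℂ] H) (hV : ∀ p : ℕ, p.Prime → adjoint (V p) * V p = 1)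
    (hT1 : ∀ p : ℕ, p.Prime → V p * S = S ^ p * V p)
    (hT2 : ∀ p q : ℕ, p.Prime → q.Prime → V p * V q = V q * V p)
    (hT3 : ∀ p q : ℕ, p.Prime → q.Prime → p ≠ q → adjoint (V p) * V q = V q * adjoint (V p))
    (hT4 : ∀ p : ℕ, p.Prime → adjoint S * V p = S ^ (p - 1) * (V p * adjoint S))
    (hT5 : ∀ p : ℕ, p.Prime → ∀ k, 1 ≤ k → k < p → adjoint (V p) * (S ^ k * V p) = 0)
    (hbig : ∀ F : Finset ℕ, (∀ p ∈ F, p.Prime) →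
      (1 - S * adjoint S) *
        ((F.sort (· ≤ ·)).map (fun p =>
          ((List.range p).map
            (fun k => 1 - S ^ k * V p * adjoint (V p) * (adjoint S) ^ k)).prod)).prod ≠ 0) :
    ∀ E : Finset (ℕ × ℕ), (∀ x ∈ E, 0 < x.2) → (0, 1) ∉ E →
      ∀ l : List (ℕ × ℕ), l.Nodup → (∀ x, x ∈ l ↔ x ∈ E) →
        (l.map (fun x =>
          1 - (S ^ x.1 * ((x.2.primeFactorsList).map V).prod) *
            adjoint (S ^ x.1 * ((x.2.primeFactorsList).map V).prod))).prod ≠ 0 := by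
  simp only [← ContinuousLinearMap.star_eq_adjoint] at hS hV hT3 hT4 hT5 hbig ⊢
  intro E hpos h01 l hnd hmem
  classical
  set F : Finset ℕ := E.biUnion (fun x => x.2.primeFactors) with hF
  have hFp : ∀ p ∈ F, p.Prime := by
    intro p hp
    rw [hF] at hp
    obtain ⟨x, _, hx⟩ := Finset.mem_biUnion.mp hp
    exact Nat.prime_of_mem_primeFactors hx
  set B : ℕ → (H →L[ℂ] H) := fun p =>
    ((List.range p).map (fun k => 1 - S ^ k * V p * star (V p) * (star S) ^ k)).prod with hB
  set R : H →L[ℂ] H := (1 - S * star S) * ((F.sort (· ≤ ·)).map B).prod with hR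
  have hRne : R ≠ 0 := by
    rw [hR]
    exact hbig F hFp
  -- key vanishing
  have key : ∀ x ∈ E, R * (S ^ x.1 * ((x.2.primeFactorsList).map V).prod) = 0 := by
    intro x hxE
    obtain ⟨m, a⟩ := x
    show R * (S ^ m * ((a.primeFactorsList).map V).prod) = 0
    rcases Nat.eq_zero_or_pos m with rfl | hm
    · -- m = 0
      have ha2 : 2 ≤ a := by
        rcases Nat.lt_or_ge a 2 with h | h
        · have h1 : 0 < a := hpos (0, a) hxE
          have h2 : a = 1 := by omega
          subst h2
          exact absurd hxE h01
        · exact h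
      obtain ⟨p, t, hpt⟩ := List.exists_cons_of_ne_nil
        (show a.primeFactorsList ≠ [] by
          rw [Ne, Nat.primeFactorsList_eq_nil]
          push_neg
          omega)
      have hpprime : p.Prime := Nat.prime_of_mem_primeFactorsList
        (by rw [hpt]; exact List.mem_cons_self)
      have hpF : p ∈ F := by
        rw [hF]
        exact Finset.mem_biUnion.mpr ⟨(0, a), hxE,
          Nat.mem_primeFactors_iff_mem_primeFactorsList.mpr
            (by rw [hpt]; exact List.mem_cons_self)⟩
      have hcfac : ∀ q : ℕ, q.Prime → ∀ k, k < q →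
          Commute (1 - V p * star (V p)) (1 - S ^ k * V q * star (V q) * (star S) ^ k) := by
        intro q hq k hk
        refine comm_one_sub ?_
        by_cases hqp : q = p
        · subst hqp
          rcases Nat.eq_zero_or_pos k with rfl | hk1
          · simpa using (Commute.refl (V q * star (V q)))
          · exact Eorth hS hq.pos (hT4 q hq) (fun j h1 h2 => hT5 q hq j h1 h2) k hk1 hk
        · exact Ecross hS hpprime hq (fun h => hqp h.symm) (hT1 p hpprime) (hT4 p hpprime)
            (hT1 q hq) (hT4 q hq) (hT2 p q hpprime hq)
            (hT3 p q hpprime hq (fun h => hqp h.symm)) k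
      -- split the sorted list at p
      have hpsort : p ∈ F.sort (· ≤ ·) := (Finset.mem_sort _).mpr hpF
      obtain ⟨s₁, s₂, hsplit⟩ := List.append_of_mem hpsort
      have hp1 : 1 ≤ p := hpprime.pos
      have hrange : List.range p = 0 :: (List.range (p - 1)).map Nat.succ := by
        conv_lhs => rw [show p = (p - 1) + 1 by omega]
        rw [List.range_succ_eq_map]
      set rest : H →L[ℂ] H :=
        (((List.range (p - 1)).map Nat.succ).map
          (fun k => 1 - S ^ k * V p * star (V p) * (star S) ^ k)).prod with hrest_def
      have hBp : B p = (1 - V p * star (V p)) * rest := by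
        rw [hB]
        simp only []
        rw [hrange, List.map_cons, List.prod_cons, hrest_def]
        simp
      have hrestc : Commute (1 - V p * star (V p)) rest := by
        refine Commute.list_prod_right _ _ ?_
        intro y hy
        obtain ⟨k, hk, rfl⟩ := List.mem_map.mp hy
        obtain ⟨j, hj, rfl⟩ := List.mem_map.mp hk
        exact hcfac p hpprime j.succ (by
          have := List.mem_range.mp hj
          omega)
      have hs2c : Commute (1 - V p * star (V p)) ((s₂.map B).prod) := by
        refine Commute.list_prod_right _ _ ?_
        intro y hy
        obtain ⟨q, hq, rfl⟩ := List.mem_map.mp hy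
        have hqF : q ∈ F := (Finset.mem_sort _).mp (by
          rw [hsplit]
          exact List.mem_append.mpr (Or.inr (List.mem_cons_of_mem _ hq)))
        have hqprime := hFp q hqF
        rw [hB]
        refine Commute.list_prod_right _ _ ?_
        intro z hz
        obtain ⟨k, hk, rfl⟩ := List.mem_map.mp hz
        exact hcfac q hqprime k (List.mem_range.mp hk)
      have hcomball : Commute (1 - V p * star (V p)) (rest * (s₂.map B).prod) :=
        hrestc.mul_right hs2c
      have hdec : R = ((1 - S * star S) *
          ((s₁.map B).prod * (rest * (s₂.map B).prod))) * (1 - V p * star (V p)) := by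
        rw [hR, hsplit, List.map_append, List.prod_append, List.map_cons, List.prod_cons,
          hBp]
        rw [mul_assoc (1 - V p * star (V p)) rest, hcomball.eq]
        simp only [mul_assoc]
      have hcW : (1 - V p * star (V p)) * (S ^ 0 * ((a.primeFactorsList).map V).prod) = 0 := by
        rw [hpt, pow_zero, one_mul, List.map_cons, List.prod_cons, ← mul_assoc]
        have hz : (1 - V p * star (V p)) * V p = 0 := by
          rw [sub_mul, one_mul, mul_assoc, hV p hpprime, mul_one, sub_self]
        rw [hz, zero_mul]
      rw [hdec, mul_assoc, hcW, mul_zero]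
    · -- m ≥ 1
      have hcomL : Commute (1 - S * star S) (((F.sort (· ≤ ·)).map B).prod) := by
        refine Commute.list_prod_right _ _ ?_
        intro y hy
        obtain ⟨q, hq, rfl⟩ := List.mem_map.mp hy
        have hqprime := hFp q ((Finset.mem_sort _).mp hq)
        rw [hB]
        refine Commute.list_prod_right _ _ ?_
        intro z hz
        obtain ⟨k, hk, rfl⟩ := List.mem_map.mp hz
        exact comm_one_sub (Ess hS hqprime.pos (hT1 q hqprime) (hT4 q hqprime) k)
      have hReq : R = ((F.sort (· ≤ ·)).map B).prod * (1 - S * star S) := by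
        rw [hR]; exact hcomL.eq
      have hzero : (1 - S * star S) * (S ^ m * ((a.primeFactorsList).map V).prod) = 0 := by
        conv_lhs => rw [show m = (m - 1) + 1 by omega]
        rw [pow_succ']
        have hzs : (1 - S * star S) * S = 0 := by
          rw [sub_mul, one_mul, mul_assoc, hS, mul_one, sub_self]
        simp only [mul_assoc]
        rw [← mul_assoc, hzs, zero_mul]
      rw [hReq, mul_assoc, hzero, mul_zero]
  -- absorption
  have habs : ∀ L : List (ℕ × ℕ), (∀ x ∈ L, x ∈ E) →
      R * (L.map (fun x =>
        1 - (S ^ x.1 * ((x.2.primeFactorsList).map V).prod) *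
          star (S ^ x.1 * ((x.2.primeFactorsList).map V).prod))).prod = R := by
    intro L
    induction L with
    | nil => intro _; simp
    | cons x L ih =>
      intro hmemL
      rw [List.map_cons, List.prod_cons, ← mul_assoc]
      have hx : R * (1 - (S ^ x.1 * ((x.2.primeFactorsList).map V).prod) *
          star (S ^ x.1 * ((x.2.primeFactorsList).map V).prod)) = R := by
        rw [mul_sub, mul_one, ← mul_assoc, key x (hmemL x (List.mem_cons_self)),
          zero_mul, sub_zero]
      rw [hx]
      exact ih (fun y hy => hmemL y (List.mem_cons_of_mem _ hy))
  intro h0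
  exact hRne (by rw [← habs l (fun x hx => (hmem x).mp hx), h0, mul_zero])
end

section
/- Let ℓ²(ℤ×ℕ×) be the Hilbert space with orthonormal basis e_{(m,a)} indexed by pairs (m,a) with m an integer and a a positive integer. Let S be the operator determined by S e_{(m,a)} = e_{(m+1,a)}, and for each prime p let V_p be the operator determined by V_p e_{(m,a)} = e_{(pm,pa)}. Then S is unitary, each V_p is an isometry, and the following relations hold: V_pS = S^pV_p for all primes p; V_pV_q = V_qV_p for all primes p, q; V_p*V_q = V_qV_p* for distinct primes p, q; V_p*S^kV_p = 0 for 1 ≤ k < p. Moreover S^lV_pV_p*S^{*l} e_{(0,1)} = 0 for every prime p and 0 ≤ l < p, and consequently for every finite set F of primes the operator ∏_{p∈F} ∏_{l=0}^{p−1} (1 − S^lV_pV_p*S^{*l}) is nonzero. -/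
open ContinuousLinearMap

section aux
variable {H : Type*} [NormedAddCommGroup H] [InnerProductSpace ℂ H] [CompleteSpace H]

private lemma vec_ext' (e : HilbertBasis (ℤ × ℕ+) ℂ H) {x y : H}
    (h : ∀ i, (inner ℂ (e i) x : ℂ) = inner ℂ (e i) y) : x = y := by
  apply e.repr.injective
  ext i
  rw [e.repr_apply_apply, e.repr_apply_apply]
  exact h i

private lemma op_ext' (e : HilbertBasis (ℤ × ℕ+) ℂ H) {f g : H →L[ℂ] H}
    (h : ∀ i, f (e i) = g (e i)) : f = g := by
  refine ContinuousLinearMap.ext_on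
    (Submodule.dense_iff_topologicalClosure_eq_top.mpr e.dense_span) ?_
  rintro _ ⟨i, rfl⟩
  exact h i

private lemma inner_basis' (e : HilbertBasis (ℤ × ℕ+) ℂ H) (i j : ℤ × ℕ+) :
    (inner ℂ (e i) (e j) : ℂ) = if i = j then 1 else 0 :=
  orthonormal_iff_ite.mp e.orthonormal i j

private lemma prod_fix' (v : H) : ∀ L : List (H →L[ℂ] H), (∀ T ∈ L, T v = v) → L.prod v = v
  | [], _ => by simp
  | T :: L, h => by
    rw [List.prod_cons, ContinuousLinearMap.mul_apply,
      prod_fix' v L (fun T hT => h T (List.mem_cons_of_mem _ hT)), h T List.mem_cons_self]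

end aux

/-- On the Hilbert space `ℓ²(ℤ × ℕ×)` (abstractly: a Hilbert space with a
Hilbert basis `e` indexed by `ℤ × ℕ+`), the operators `S` and `V_p` determined by
`S e_{(m,a)} = e_{(m+1,a)}` and `V_p e_{(m,a)} = e_{(pm,pa)}` satisfy: `S` is unitary, each
`V_p` is an isometry, the relations (T1), (T2), (T3), (T5) hold, each
`S^l V_p V_p* S^{*l}` kills `e_{(0,1)}` for `0 ≤ l < p`, and consequently for every finite set
`F` of primes the product `∏_{p∈F} ∏_{l=0}^{p-1} (1 - S^l V_p V_p* S^{*l})` is nonzero. -/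
theorem stmt2 {H : Type*} [NormedAddCommGroup H] [InnerProductSpace ℂ H] [CompleteSpace H]
    (e : HilbertBasis (ℤ × ℕ+) ℂ H)
    (S : H →L[ℂ] H) (hS : ∀ (m : ℤ) (a : ℕ+), S (e (m, a)) = e (m + 1, a))
    (V : ℕ → H →L[ℂ] H)
    (hV : ∀ (p : ℕ) (hp : p.Prime) (m : ℤ) (a : ℕ+),
      V p (e (m, a)) = e ((p : ℤ) * m, (p.toPNat hp.pos) * a)) :
    (adjoint S * S = 1 ∧ S * adjoint S = 1) ∧
    (∀ p : ℕ, p.Prime → adjoint (V p) * V p = 1) ∧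
    (∀ p : ℕ, p.Prime → V p * S = S ^ p * V p) ∧
    (∀ p q : ℕ, p.Prime → q.Prime → V p * V q = V q * V p) ∧
    (∀ p q : ℕ, p.Prime → q.Prime → p ≠ q → adjoint (V p) * V q = V q * adjoint (V p)) ∧
    (∀ p : ℕ, p.Prime → ∀ k, 1 ≤ k → k < p → adjoint (V p) * (S ^ k * V p) = 0) ∧
    (∀ p : ℕ, p.Prime → ∀ l, l < p →
      (S ^ l * V p * adjoint (V p) * (adjoint S) ^ l) (e (0, 1)) = 0) ∧
    (∀ F : Finset ℕ, (∀ p ∈ F, p.Prime) →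
      ((F.sort (· ≤ ·)).map (fun p =>
        ((List.range p).map
          (fun l => 1 - S ^ l * V p * adjoint (V p) * (adjoint S) ^ l)).prod)).prod ≠ 0) := by
  -- powers of S
  have hSk : ∀ (k : ℕ) (m : ℤ) (a : ℕ+), (S ^ k) (e (m, a)) = e (m + k, a) := by
    intro k
    induction k with
    | zero => intro m a; simp
    | succ k ih =>
      intro m a
      rw [pow_succ', ContinuousLinearMap.mul_apply, ih, hS]
      congr 2
      push_cast; ring
  -- adjoint of S
  have hSadj : ∀ (m : ℤ) (a : ℕ+), adjoint S (e (m, a)) = e (m - 1, a) := by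
    intro m a
    apply vec_ext' e
    rintro ⟨i, b⟩
    rw [ContinuousLinearMap.adjoint_inner_right, hS, inner_basis', inner_basis']
    congr 1
    simp only [Prod.mk.injEq, eq_iff_iff]
    constructor <;> rintro ⟨h1, h2⟩ <;> exact ⟨by omega, h2⟩
  have hSadjk : ∀ (k : ℕ) (m : ℤ) (a : ℕ+), ((adjoint S) ^ k) (e (m, a)) = e (m - k, a) := by
    intro k
    induction k with
    | zero => intro m a; simp
    | succ k ih =>
      intro m a
      rw [pow_succ', ContinuousLinearMap.mul_apply, ih, hSadj]
      congr 2
      push_cast; ring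
  -- adjoint of V p
  have hVadj1 : ∀ (p : ℕ) (hp : p.Prime) (m : ℤ) (a : ℕ+),
      adjoint (V p) (e ((p : ℤ) * m, (p.toPNat hp.pos) * a)) = e (m, a) := by
    intro p hp m a
    apply vec_ext' e
    rintro ⟨i, b⟩
    rw [ContinuousLinearMap.adjoint_inner_right, hV p hp, inner_basis', inner_basis']
    congr 1
    simp only [Prod.mk.injEq, eq_iff_iff]
    constructor
    · rintro ⟨h1, h2⟩
      have hp0 : (p : ℤ) ≠ 0 := by exact_mod_cast hp.ne_zero
      exact ⟨mul_left_cancel₀ hp0 h1, mul_left_cancel h2⟩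
    · rintro ⟨rfl, rfl⟩; exact ⟨rfl, rfl⟩
  have hVadj0 : ∀ (p : ℕ) (hp : p.Prime) (m : ℤ) (a : ℕ+),
      ¬((p : ℤ) ∣ m ∧ p ∣ (a : ℕ)) → adjoint (V p) (e (m, a)) = 0 := by
    intro p hp m a hnd
    apply vec_ext' e
    rintro ⟨i, b⟩
    rw [ContinuousLinearMap.adjoint_inner_right, hV p hp, inner_basis', inner_zero_right]
    rw [if_neg]
    rintro h
    rw [Prod.mk.injEq] at h
    refine hnd ⟨⟨i, h.1.symm⟩, ⟨b, ?_⟩⟩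
    rw [← h.2]
    exact PNat.mul_coe _ _
  have hpP : ∀ (p : ℕ) (hp : p.Prime), ((p.toPNat hp.pos : ℕ+) : ℕ) = p := fun p hp => rfl
  -- part 1: S unitary
  have part1a : adjoint S * S = 1 := by
    apply op_ext' e
    rintro ⟨m, a⟩
    rw [ContinuousLinearMap.mul_apply, hS, hSadj, ContinuousLinearMap.one_apply,
      add_sub_cancel_right]
  have part1b : S * adjoint S = 1 := by
    apply op_ext' e
    rintro ⟨m, a⟩
    rw [ContinuousLinearMap.mul_apply, hSadj, hS, ContinuousLinearMap.one_apply,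
      sub_add_cancel]
  -- part 2: isometries
  have part2 : ∀ p : ℕ, p.Prime → adjoint (V p) * V p = 1 := by
    intro p hp
    apply op_ext' e
    rintro ⟨m, a⟩
    rw [ContinuousLinearMap.mul_apply, hV p hp, hVadj1 p hp, ContinuousLinearMap.one_apply]
  -- part 3: V S = S^p V
  have part3 : ∀ p : ℕ, p.Prime → V p * S = S ^ p * V p := by
    intro p hp
    apply op_ext' e
    rintro ⟨m, a⟩
    rw [ContinuousLinearMap.mul_apply, ContinuousLinearMap.mul_apply, hS, hV p hp,
      hV p hp, hSk]
    congr 2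
    ring
  -- part 4
  have part4 : ∀ p q : ℕ, p.Prime → q.Prime → V p * V q = V q * V p := by
    intro p q hp hq
    apply op_ext' e
    rintro ⟨m, a⟩
    rw [ContinuousLinearMap.mul_apply, ContinuousLinearMap.mul_apply, hV q hq, hV p hp,
      hV p hp, hV q hq]
    congr 2
    · ring
    · exact mul_left_comm _ _ _
  -- part 5
  have part5 : ∀ p q : ℕ, p.Prime → q.Prime → p ≠ q →
      adjoint (V p) * V q = V q * adjoint (V p) := by
    intro p q hp hq hne
    have hpq : ¬ (p ∣ q) := fun h => hne ((Nat.prime_dvd_prime_iff_eq hp hq).mp h)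
    have hpZ : Prime (p : ℤ) := Nat.prime_iff_prime_int.mp hp
    apply op_ext' e
    rintro ⟨m, a⟩
    rw [ContinuousLinearMap.mul_apply, ContinuousLinearMap.mul_apply, hV q hq]
    by_cases hd : (p : ℤ) ∣ m ∧ p ∣ (a : ℕ)
    · obtain ⟨⟨m', rfl⟩, hda⟩ := hd
      have hdvd : (p.toPNat hp.pos) ∣ a := by
        rw [PNat.dvd_iff]; exact hda
      obtain ⟨a', rfl⟩ := hdvd
      have h1 : (q : ℤ) * ((p : ℤ) * m') = (p : ℤ) * ((q : ℤ) * m') := by ring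
      have h2 : (q.toPNat hq.pos) * ((p.toPNat hp.pos) * a')
          = (p.toPNat hp.pos) * ((q.toPNat hq.pos) * a') := mul_left_comm _ _ _
      rw [h1, h2, hVadj1 p hp, hVadj1 p hp, hV q hq]
    · have hd2 : ¬((p : ℤ) ∣ (q : ℤ) * m ∧ p ∣ ((q.toPNat hq.pos * a : ℕ+) : ℕ)) := by
        rintro ⟨hdm, hda⟩
        refine hd ⟨?_, ?_⟩
        · rcases hpZ.dvd_mul.mp hdm with h | h
          · exact absurd (Int.natCast_dvd_natCast.mp h) hpq
          · exact h
        · rw [PNat.mul_coe, hpP q hq] at hda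
          rcases (Nat.Prime.dvd_mul hp).mp hda with h | h
          · exact absurd h hpq
          · exact h
      rw [hVadj0 p hp _ _ hd2, hVadj0 p hp _ _ hd, map_zero]
  -- part 6
  have part6 : ∀ p : ℕ, p.Prime → ∀ k, 1 ≤ k → k < p →
      adjoint (V p) * (S ^ k * V p) = 0 := by
    intro p hp k hk1 hkp
    apply op_ext' e
    rintro ⟨m, a⟩
    rw [ContinuousLinearMap.mul_apply, ContinuousLinearMap.mul_apply, hV p hp, hSk,
      ContinuousLinearMap.zero_apply]
    apply hVadj0 p hp
    rintro ⟨hdm, -⟩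
    have : (p : ℤ) ∣ (k : ℤ) := (dvd_add_right ⟨m, rfl⟩).mp hdm
    have := Int.le_of_dvd (by exact_mod_cast hk1) this
    omega
  -- part 7 (in fact for all l, since p ∤ 1)
  have part7 : ∀ p : ℕ, p.Prime → ∀ l : ℕ,
      (S ^ l * V p * adjoint (V p) * (adjoint S) ^ l) (e (0, 1)) = 0 := by
    intro p hp l
    rw [ContinuousLinearMap.mul_apply, ContinuousLinearMap.mul_apply,
      ContinuousLinearMap.mul_apply, hSadjk]
    have hnd : ¬((p : ℤ) ∣ (0 : ℤ) - (l : ℤ) ∧ p ∣ ((1 : ℕ+) : ℕ)) := by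
      rintro ⟨-, hda⟩
      exact hp.ne_one (Nat.dvd_one.mp hda)
    rw [hVadj0 p hp _ _ hnd, map_zero, map_zero]
  refine ⟨⟨part1a, part1b⟩, part2, part3, part4, part5, part6,
    fun p hp l _ => part7 p hp l, ?_⟩
  -- part 8
  intro F hF h0
  have hfix : (((F.sort (· ≤ ·)).map (fun p =>
      ((List.range p).map
        (fun l => 1 - S ^ l * V p * adjoint (V p) * (adjoint S) ^ l)).prod)).prod) (e (0, 1))
      = e (0, 1) := by
    apply prod_fix'
    intro T hT
    obtain ⟨p, hpmem, rfl⟩ := List.mem_map.mp hT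
    have hp : p.Prime := hF p ((Finset.mem_sort _).mp hpmem)
    apply prod_fix'
    intro T hT
    obtain ⟨l, -, rfl⟩ := List.mem_map.mp hT
    rw [ContinuousLinearMap.sub_apply, ContinuousLinearMap.one_apply, part7 p hp l, sub_zero]
  rw [h0, ContinuousLinearMap.zero_apply] at hfix
  exact e.orthonormal.ne_zero (0, 1) hfix.symm
end

section
/- Let N be a positive integer, r ∈ ℤ/Nℤ, and (w,y) ∈ ℚ × ℚ with y > 0. Suppose there exists (j,b) ∈ B(r,N) such that w+yj is a nonnegative integer and yb is a positive integer. Then yN is a positive integer, all the numbers w+yj with j a nonnegative integer satisfying j ≡ r (mod N) and w+yj ≥ 0 are nonnegative integers lying in a single congruence class s modulo yN, and Her({(w+yj, yb) : (j,b) ∈ B(r,N)} ∩ (ℕ⋊ℕ×)) = B(s, yN). (In the notation of the paper: θ_{(w,y)}(B(r,N)) = B(w+ry, yN).) -/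
/-- The set `B(r,N) := {(k,a) ∈ ℕ⋊ℕ× : a ∣ N and k ≡ r (mod a)}`, for `r ∈ ℤ/Nℤ`. -/
def brownloweB (N : ℕ) (r : ZMod N) : Set (ℕ × ℕ) :=
  {x | 0 < x.2 ∧ x.2 ∣ N ∧ (x.1 : ZMod x.2) = ZMod.cast r}

/-- The partial order on `ℕ⋊ℕ×`: `x ≤ y` iff `y = x·(l,e)` for some `(l,e) ∈ ℕ⋊ℕ×`. -/
def brownloweLe (x y : ℕ × ℕ) : Prop :=
  ∃ l e : ℕ, 0 < e ∧ y.1 = x.1 + x.2 * l ∧ y.2 = x.2 * e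

/-- Hereditary closure: elements of `ℕ⋊ℕ×` dominated by some element of `X`. -/
def brownloweHer (X : Set (ℕ × ℕ)) : Set (ℕ × ℕ) :=
  {x | 0 < x.2 ∧ ∃ y ∈ X, brownloweLe x y}

/-- If `N` is a positive integer, `r ∈ ℤ/Nℤ`, `(w,y) ∈ ℚ × ℚ` with `y > 0`,
and some `(j,b) ∈ B(r,N)` has `w + yj ∈ ℕ` and `yb ∈ ℕ×`, then `yN` is a positive integer,
all numbers `w + yj` (for `j ∈ ℕ` with `j ≡ r (mod N)` and `w + yj ≥ 0`) are nonnegative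
integers lying in a single class `s` modulo `yN`, and
`Her({(w+yj, yb) : (j,b) ∈ B(r,N)} ∩ (ℕ⋊ℕ×)) = B(s, yN)`. -/
theorem stmt3 (N : ℕ) (hN : 0 < N) (r : ZMod N) (w y : ℚ) (hy : 0 < y)
    (h : ∃ jb ∈ brownloweB N r, (∃ n : ℕ, (n : ℚ) = w + y * jb.1) ∧
      (∃ b : ℕ, 0 < b ∧ (b : ℚ) = y * jb.2)) :
    ∃ (M : ℕ) (s : ZMod M), 0 < M ∧ (M : ℚ) = y * N ∧
      (∀ j : ℕ, (j : ZMod N) = r → 0 ≤ w + y * j →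
        ∃ n : ℕ, (n : ℚ) = w + y * j ∧ (n : ZMod M) = s) ∧
      brownloweHer {z : ℕ × ℕ | 0 < z.2 ∧ ∃ jb ∈ brownloweB N r,
          (z.1 : ℚ) = w + y * jb.1 ∧ (z.2 : ℚ) = y * jb.2} = brownloweB M s := by
  haveI : NeZero N := ⟨hN.ne'⟩
  obtain ⟨⟨j₀, b₀⟩, ⟨hb₀pos, hb₀N, hj₀r⟩, ⟨n₀, hn₀⟩, ⟨c₀, hc₀pos, hc₀⟩⟩ := h
  simp only at hn₀ hc₀ hj₀r hb₀pos hb₀N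
  obtain ⟨q, hqe⟩ := hb₀N
  have hqpos : 0 < q := by
    rcases Nat.eq_zero_or_pos q with h0 | h0
    · subst h0; simp at hqe; omega
    · exact h0
  set M : ℕ := c₀ * q with hMdef
  have hMpos : 0 < M := Nat.mul_pos hc₀pos hqpos
  have hNq : (N : ℚ) = b₀ * q := by exact_mod_cast hqe
  have hMq : (M : ℚ) = y * N := by
    push_cast [hMdef]
    linear_combination (q : ℚ) * hc₀ - y * hNq
  -- congruence extractor
  have hdvdmod : ∀ (b j : ℕ), (j : ZMod b) = ZMod.cast r → (b : ℤ) ∣ (r.val : ℤ) - j := by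
    intro b j hj
    have h1 : (j : ZMod b) = ((r.val : ℕ) : ZMod b) := by
      rw [ZMod.natCast_val r]; exact hj
    exact ((ZMod.natCast_eq_natCast_iff _ _ _).mp h1).dvd
  obtain ⟨t₀, ht₀⟩ := hdvdmod b₀ j₀ hj₀r
  set V : ℤ := (n₀ : ℤ) + c₀ * t₀ with hVdef
  have hV : (V : ℚ) = w + y * r.val := by
    have h1 : ((r.val : ℕ) : ℚ) - (j₀ : ℚ) = (b₀ : ℚ) * (t₀ : ℚ) := by exact_mod_cast ht₀
    push_cast [hVdef]
    linear_combination hn₀ + (t₀ : ℚ) * hc₀ - y * h1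
  -- characterization of the congruence class of s := V mod M
  have hchar : ∀ (a x1 : ℕ), a ∣ M →
      ((x1 : ZMod a) = ZMod.cast ((V : ZMod M)) ↔ (a : ℤ) ∣ (x1 : ℤ) - V) := by
    intro a x1 hdvd
    have h2 : (ZMod.cast ((V : ZMod M)) : ZMod a) = ((V : ℤ) : ZMod a) := by
      have := map_intCast (ZMod.castHom hdvd (ZMod a)) V
      rwa [ZMod.castHom_apply] at this
    rw [h2, show ((x1 : ℕ) : ZMod a) = ((x1 : ℤ) : ZMod a) by push_cast; rfl,
      ZMod.intCast_eq_intCast_iff]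
    constructor
    · intro hh
      exact (dvd_sub_comm).mp hh.dvd
    · intro hh
      exact (Int.modEq_iff_dvd).mpr ((dvd_sub_comm).mp hh)
  refine ⟨M, ((V : ℤ) : ZMod M), hMpos, hMq, ?_, ?_⟩
  · -- all values lie in class s
    intro j hj hwyj
    have h1 : (j : ZMod N) = ZMod.cast r := by rw [ZMod.cast_id]; exact hj
    obtain ⟨k, hk⟩ := hdvdmod N j h1
    have hkq : ((r.val : ℕ) : ℚ) - (j : ℚ) = (N : ℚ) * (k : ℚ) := by exact_mod_cast hk
    have hwv : ((V - M * k : ℤ) : ℚ) = w + y * j := by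
      push_cast
      linear_combination hV - (k : ℚ) * hMq + y * hkq
    have hnn : (0 : ℤ) ≤ V - M * k := by
      have : (0 : ℚ) ≤ ((V - M * k : ℤ) : ℚ) := by rw [hwv]; exact hwyj
      exact_mod_cast this
    refine ⟨(V - M * k).toNat, ?_, ?_⟩
    · have h5 := congrArg (fun z : ℤ => (z : ℚ)) (Int.toNat_of_nonneg hnn)
      simp only [Int.cast_natCast] at h5
      rw [h5]; exact hwv
    · have h3 := congrArg (fun z : ℤ => (z : ZMod M)) (Int.toNat_of_nonneg hnn)
      simp only [Int.cast_natCast] at h3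
      rw [h3]
      push_cast
      simp [ZMod.natCast_self]
  · -- the set equality
    ext x
    simp only [brownloweHer, brownloweB, brownloweLe, Set.mem_setOf_eq]
    constructor
    · rintro ⟨hx2, z, ⟨hz2pos, ⟨j, b⟩, ⟨hbpos, hbN, hjr⟩, hz1, hz2⟩, l, e, hepos, hle1, hle2⟩
      simp only at hz1 hz2 hjr hbpos hbN
      obtain ⟨d, hd⟩ := hbN
      have hd' : (N : ℚ) = b * d := by exact_mod_cast hd
      refine ⟨hx2, ?_, ?_⟩
      · -- x.2 ∣ M
        have hMz : M = z.2 * d := by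
          have : (M : ℚ) = ((z.2 * d : ℕ) : ℚ) := by
            push_cast
            linear_combination hMq + y * hd' - (d : ℚ) * hz2
          exact_mod_cast this
        exact dvd_trans ⟨e, hle2⟩ ⟨d, hMz⟩
      · obtain ⟨t, ht⟩ := hdvdmod b j hjr
        have ht' : ((r.val : ℕ) : ℚ) - (j : ℚ) = (b : ℚ) * (t : ℚ) := by exact_mod_cast ht
        have hle1' : (z.1 : ℚ) = x.1 + x.2 * l := by exact_mod_cast hle1
        have hle2' : (z.2 : ℚ) = x.2 * e := by exact_mod_cast hle2
        have hq1 : (x.1 : ℚ) = (V : ℚ) - (x.2 : ℚ) * e * t - (x.2 : ℚ) * l := by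
          linear_combination hz1 - hle1' - hV - y * ht' + (t : ℚ) * hz2 - (t : ℚ) * hle2'
        have hint : (x.1 : ℤ) = V - (x.2 : ℤ) * e * t - (x.2 : ℤ) * l := by exact_mod_cast hq1
        have hxdvd : x.2 ∣ M := by
          have hMz : M = z.2 * d := by
            have : (M : ℚ) = ((z.2 * d : ℕ) : ℚ) := by
              push_cast
              linear_combination hMq + y * hd' - (d : ℚ) * hz2
            exact_mod_cast this
          exact dvd_trans ⟨e, hle2⟩ ⟨d, hMz⟩
        rw [hchar x.2 x.1 hxdvd]
        exact ⟨-((e : ℤ) * t) - l, by rw [hint]; ring⟩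
    · rintro ⟨hx2, hxM, hxs⟩
      obtain ⟨f, hf⟩ := hxM
      have hfpos : 0 < f := by
        rcases Nat.eq_zero_or_pos f with h0 | h0
        · subst h0; simp at hf; omega
        · exact h0
      have hdx : (x.2 : ℤ) ∣ (x.1 : ℤ) - V := (hchar x.2 x.1 ⟨f, hf⟩).mp hxs
      obtain ⟨u, hu⟩ := hdx
      set k : ℕ := x.1 + V.natAbs with hkdef
      have hx1le : (x.1 : ℤ) ≤ V + M * k := by
        have h1 : -(V.natAbs : ℤ) ≤ V := by
          rw [← Int.abs_eq_natAbs]; exact neg_abs_le V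
        have h2 : (M : ℤ) * k ≥ k := by
          have : (1 : ℤ) ≤ (M : ℤ) := by exact_mod_cast hMpos
          nlinarith [Int.natCast_nonneg k]
        have h3 : (k : ℤ) = (x.1 : ℤ) + V.natAbs := by push_cast [hkdef]; ring
        omega
      have hnn : (0 : ℤ) ≤ V + M * k := le_trans (Int.natCast_nonneg x.1) hx1le
      set n1 : ℕ := (V + M * k).toNat with hn1def
      have hn1 : (n1 : ℤ) = V + M * k := Int.toNat_of_nonneg hnn
      have hn1q : (n1 : ℚ) = (V : ℚ) + (M : ℚ) * k := by exact_mod_cast hn1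
      have hfz : (M : ℤ) = (x.2 : ℤ) * f := by exact_mod_cast hf
      have hdl : (x.2 : ℤ) ∣ (n1 : ℤ) - x.1 :=
        ⟨(f : ℤ) * k - u, by linear_combination hn1 - hu + (k : ℤ) * hfz⟩
      have hxn1 : x.1 ≤ n1 := by exact_mod_cast hx1le.trans_eq hn1.symm
      have hdln : x.2 ∣ n1 - x.1 := by
        have : (x.2 : ℤ) ∣ ((n1 - x.1 : ℕ) : ℤ) := by
          rwa [Int.natCast_sub hxn1]
        exact_mod_cast this
      refine ⟨hx2, (n1, M), ⟨hMpos, (r.val + N * k, N), ⟨hN, dvd_refl N, ?_⟩, ?_, ?_⟩,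
        (n1 - x.1) / x.2, f, hfpos, ?_, hf⟩
      · -- (r.val + N*k : ZMod N) = cast r
        show ((r.val + N * k : ℕ) : ZMod N) = ZMod.cast r
        rw [ZMod.cast_id]
        push_cast
        simp [ZMod.natCast_self, ZMod.natCast_val, ZMod.cast_id]
      · -- (n1 : ℚ) = w + y * (r.val + N*k)
        show (n1 : ℚ) = w + y * ((r.val + N * k : ℕ) : ℚ)
        push_cast
        linear_combination hn1q + hV + (k : ℚ) * hMq
      · show (M : ℚ) = y * ((N : ℕ) : ℚ)
        exact hMq
      · -- n1 = x.1 + x.2 * ((n1 - x.1)/x.2)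
        show n1 = x.1 + x.2 * ((n1 - x.1) / x.2)
        rw [Nat.mul_div_cancel' hdln]
        omega
end

section
/- Let m be a nonnegative integer and (s,t) ∈ ℚ × ℚ with t > 0. Suppose there exists (j,b) ∈ A(m,∇) such that s+tj is a nonnegative integer and tb is a positive integer. Then s+tm is a nonnegative integer and Her({(s+tj, tb) : (j,b) ∈ A(m,∇)} ∩ (ℕ⋊ℕ×)) = A(s+tm, ∇). (In the notation of the paper: θ_{(s,t)}(A(m,∇)) = A(s+tm,∇).) -/
/-- The set `A(m,∇) := {(k,a) ∈ ℕ⋊ℕ× : k ≤ m and a ∣ (m-k)}`. -/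
def brownloweA (m : ℕ) : Set (ℕ × ℕ) :=
  {x | 0 < x.2 ∧ x.1 ≤ m ∧ x.2 ∣ (m - x.1)}

/-- If `j ≤ m` and `m - j = c * q` in `ℕ`, then `(m : ℚ) = j + c * q`. -/
lemma brownlowe_cast_sub {m j c q : ℕ} (hjm : j ≤ m) (hq : m - j = c * q) :
    (m : ℚ) = j + c * q := by
  have h1 : ((m - j : ℕ) : ℚ) = (m : ℚ) - j := Nat.cast_sub hjm
  have h2 : ((m - j : ℕ) : ℚ) = (c : ℚ) * q := by rw [hq]; push_cast; ring
  linarith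

/-- If `m ∈ ℕ`, `(s,t) ∈ ℚ × ℚ` with `t > 0`, and some `(j,b) ∈ A(m,∇)` has
`s + tj ∈ ℕ` and `tb ∈ ℕ×`, then `s + tm` is a nonnegative integer `n` and
`Her({(s+tj, tb) : (j,b) ∈ A(m,∇)} ∩ (ℕ⋊ℕ×)) = A(n, ∇)`; that is,
`θ_{(s,t)}(A(m,∇)) = A(s+tm, ∇)`. -/
theorem stmt4 (m : ℕ) (s t : ℚ) (ht : 0 < t)
    (h : ∃ jb ∈ brownloweA m, (∃ n : ℕ, (n : ℚ) = s + t * jb.1) ∧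
      (∃ b : ℕ, 0 < b ∧ (b : ℚ) = t * jb.2)) :
    ∃ n : ℕ, (n : ℚ) = s + t * m ∧
      brownloweHer {z : ℕ × ℕ | 0 < z.2 ∧ ∃ jb ∈ brownloweA m,
          (z.1 : ℚ) = s + t * jb.1 ∧ (z.2 : ℚ) = t * jb.2} = brownloweA n := by
  obtain ⟨⟨j, b⟩, ⟨hb, hjm, hdvd⟩, ⟨n₀, hn₀⟩, b', hb'pos, hb'⟩ := h
  obtain ⟨q₀, hq₀⟩ := hdvd
  simp only at hn₀ hb'
  have hm : (m : ℚ) = j + b * q₀ := brownlowe_cast_sub hjm hq₀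
  have hn : ((n₀ + b' * q₀ : ℕ) : ℚ) = s + t * m := by
    push_cast
    rw [hm]
    linear_combination hn₀ + (q₀ : ℚ) * hb'
  refine ⟨n₀ + b' * q₀, hn, ?_⟩
  ext ⟨k, a⟩
  simp only [brownloweHer, brownloweA, brownloweLe, Set.mem_setOf_eq]
  constructor
  · rintro ⟨ha, ⟨y1, y2⟩, ⟨hy2, ⟨j', c⟩, ⟨hc, hj'm, q₁, hq₁⟩, hy1, hyc⟩, l, e, he, hl1, hl2⟩
    simp only at hy1 hyc hl1 hl2
    have hm' : (m : ℚ) = j' + c * q₁ := brownlowe_cast_sub hj'm hq₁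
    have hl1q : (y1 : ℚ) = k + a * l := by exact_mod_cast hl1
    have hl2q : (y2 : ℚ) = a * e := by exact_mod_cast hl2
    have key : (n₀ + b' * q₀ : ℕ) = k + a * (l + e * q₁) := by
      have hkey : ((n₀ + b' * q₀ : ℕ) : ℚ) = (k : ℚ) + a * (l + e * q₁) := by
        rw [hn, hm']
        linear_combination -hy1 - (q₁ : ℚ) * hyc + hl1q + (q₁ : ℚ) * hl2q
      exact_mod_cast hkey
    exact ⟨ha, by omega, ⟨l + e * q₁, by omega⟩⟩
  · rintro ⟨ha, hkn, q, hq⟩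
    refine ⟨ha, ⟨n₀ + b' * q₀, a * b'⟩, ⟨by positivity, ⟨m, a * b⟩,
      ⟨by positivity, le_refl m, by simp⟩, hn, ?_⟩, q, b', hb'pos, by omega, rfl⟩
    push_cast
    linear_combination (a : ℚ) * hb'
end

section
/- For every nonnegative integer m, the set A(m,∇) is a nonempty hereditary directed subset of ℕ⋊ℕ×, and moreover for every (j,a) ∈ A(m,∇) and every prime p there exists k with 0 ≤ k < p such that (j+ak, ap) ∈ A(m,∇). -/
/-- For every nonnegative integer `m`, the set `A(m,∇)` is a nonempty
hereditary directed subset of `ℕ⋊ℕ×`, and for every `(j,a) ∈ A(m,∇)` and prime `p` there is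
`0 ≤ k < p` with `(j+ak, ap) ∈ A(m,∇)`. -/
theorem stmt5 (m : ℕ) :
    (brownloweA m).Nonempty ∧
    (∀ x y : ℕ × ℕ, brownloweLe x y → y ∈ brownloweA m → x ∈ brownloweA m) ∧
    (∀ x ∈ brownloweA m, ∀ y ∈ brownloweA m,
      ∃ z ∈ brownloweA m, brownloweLe x z ∧ brownloweLe y z) ∧
    (∀ j a : ℕ, (j, a) ∈ brownloweA m → ∀ p : ℕ, p.Prime →
      ∃ k, k < p ∧ (j + a * k, a * p) ∈ brownloweA m) := by
  refine ⟨⟨(m, 1), one_pos, le_refl m, one_dvd _⟩, ?_, ?_, ?_⟩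
  · rintro x y ⟨l, e, he, h1, h2⟩ ⟨hy2, hym, t, ht⟩
    rw [h2] at ht hy2
    have hx2 : 0 < x.2 := by
      rcases Nat.eq_zero_or_pos x.2 with h | h
      · simp [h] at hy2
      · exact h
    rw [Nat.mul_assoc] at ht
    have hle : m - x.1 = x.2 * (e * t) + x.2 * l := by omega
    exact ⟨hx2, by omega, ⟨e * t + l, by rw [hle, Nat.mul_add]⟩⟩
  · rintro x ⟨hx2, hxm, t, ht⟩ y ⟨hy2, hym, s, hs⟩
    exact ⟨(m, x.2 * y.2), ⟨by positivity, le_refl m, by simp⟩,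
      ⟨t, y.2, hy2, by omega, rfl⟩, ⟨s, x.2, hx2, by omega, by ring⟩⟩
  · rintro j a ⟨ha, hjm, t, ht⟩ p hp
    simp only at ha hjm ht
    have hm : m = j + a * t := by omega
    have hmle : a * (t % p) ≤ a * t := Nat.mul_le_mul_left a (Nat.mod_le t p)
    have key : a * t = a * (t % p) + a * p * (t / p) := by
      rw [Nat.mul_assoc, ← Nat.mul_add, Nat.mod_add_div]
    exact ⟨t % p, Nat.mod_lt _ hp.pos,
      Nat.lt_of_lt_of_le ha (Nat.le_mul_of_pos_right a hp.pos),
      by omega, ⟨t / p, by simp only; omega⟩⟩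
end

section
/- Let M be a positive integer, s ∈ ℤ/Mℤ, let (p_n) be a strictly increasing sequence of primes, and for each n let s_n ∈ ℤ/(p_nM)ℤ satisfy s_n ≡ s (mod M). Then for every (k,a) ∈ ℕ⋊ℕ× there exists N₀ such that for all n ≥ N₀: (k,a) ∈ B(s_n, p_nM) if and only if (k,a) ∈ B(s, M). (That is, B(s_n, p_nM) converges to B(s,M) pointwise, i.e. in the topology of {0,1}^{ℕ⋊ℕ×}.) -/
/-- Let `M` be a positive integer, `s ∈ ℤ/Mℤ`, `(p_n)` a strictly increasing
sequence of primes, and `s_n ∈ ℤ/(p_n M)ℤ` with `s_n ≡ s (mod M)`.  Then for every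
`(k,a) ∈ ℕ⋊ℕ×` there is `N₀` such that for all `n ≥ N₀`, `(k,a) ∈ B(s_n, p_n M)` iff
`(k,a) ∈ B(s, M)`; that is, `B(s_n, p_n M) → B(s, M)` in `{0,1}^{ℕ⋊ℕ×}`. -/
theorem stmt6 (M : ℕ) (hM : 0 < M) (s : ZMod M)
    (p : ℕ → ℕ) (hmono : StrictMono p) (hp : ∀ n, (p n).Prime)
    (sn : ∀ n, ZMod (p n * M)) (hs : ∀ n, (ZMod.cast (sn n) : ZMod M) = s) :
    ∀ k a : ℕ, 0 < a → ∃ N₀ : ℕ, ∀ n, N₀ ≤ n →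
      ((k, a) ∈ brownloweB (p n * M) (sn n) ↔ (k, a) ∈ brownloweB M s) := by
  intro k a ha
  refine ⟨a + 1, fun n hn => ?_⟩
  have hpa : a < p n := lt_of_lt_of_le (Nat.lt_succ_self a) (le_trans hn hmono.le_apply)
  have hcop : Nat.Coprime a (p n) :=
    Nat.Coprime.symm ((hp n).coprime_iff_not_dvd.mpr fun hdvd =>
      absurd (Nat.le_of_dvd ha hdvd) (not_le.mpr hpa))
  have hdvd : a ∣ p n * M ↔ a ∣ M := by
    constructor
    · intro h
      exact Nat.Coprime.dvd_of_dvd_mul_left hcop h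
    · intro h; exact h.mul_left _
  have key : ∀ (h2 : a ∣ M), (ZMod.cast (sn n) : ZMod a) = ZMod.cast s := by
    intro h2
    rw [← hs n]
    have := RingHom.congr_fun (ZMod.castHom_comp h2 (dvd_mul_left M (p n))) (sn n)
    simp only [RingHom.comp_apply, ZMod.castHom_apply] at this
    exact this.symm
  constructor
  · rintro ⟨h1, h2, h3⟩
    exact ⟨h1, hdvd.mp h2, by rw [h3, key (hdvd.mp h2)]⟩
  · rintro ⟨h1, h2, h3⟩
    exact ⟨h1, hdvd.mpr h2, by rw [h3, key h2]⟩
end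

section
/- For every positive integer a: (i) for 0 ≤ j, k < a, L_a(conj(ι^j)·ι^k) equals the constant function 1 if j = k and equals 0 if j ≠ k; (ii) for every f ∈ C(𝕋), ∑_{k=0}^{a−1} ι^k · α_a(L_a(conj(ι^k)·f)) = f. (This expresses that {ι^k : 0 ≤ k < a} is an orthonormal basis, with reconstruction formula, for the Hilbert bimodule over C(𝕋) with inner product ⟨f,g⟩ = L_a(conj(f)·g).) -/
open Complex

/-- The endomorphism `α_a` of functions on the circle: `α_a(f)(z) = f(z^a)`. -/
noncomputable def circleAlpha (a : ℕ) (f : Circle → ℂ) : Circle → ℂ :=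
  fun z => f (z ^ a)

/-- The transfer operator `L_a`: `L_a(f)(z) = a⁻¹ ∑_{w^a = z} f(w)`. -/
noncomputable def circleL (a : ℕ) (f : Circle → ℂ) : Circle → ℂ :=
  fun z => (a : ℂ)⁻¹ * ∑' w : {w : Circle // w ^ a = z}, f w.val

lemma circle_coe_pow (z : Circle) (n : ℕ) : ((z ^ n : Circle) : ℂ) = (z : ℂ) ^ n :=
  map_pow Circle.coeHom z n

lemma zeta_coe (a : ℕ) :
    ((Circle.exp (2 * Real.pi / a) : Circle) : ℂ) = Complex.exp (2 * Real.pi * I / a) := by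
  rw [Circle.coe_exp]
  congr 1
  push_cast
  ring

lemma zeta_prim (a : ℕ) (ha : 0 < a) :
    IsPrimitiveRoot ((Circle.exp (2 * Real.pi / a) : Circle) : ℂ) a := by
  rw [zeta_coe]
  exact Complex.isPrimitiveRoot_exp a ha.ne'

lemma zeta_pow_a (a : ℕ) (ha : 0 < a) :
    (Circle.exp (2 * Real.pi / a) : Circle) ^ a = 1 := by
  ext
  rw [circle_coe_pow, Circle.coe_one]
  exact (zeta_prim a ha).pow_eq_one

lemma circle_exp_pow (t : ℝ) (n : ℕ) : Circle.exp t ^ n = Circle.exp (n * t) := by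
  induction n with
  | zero => simp
  | succ m ih =>
    rw [pow_succ, ih, ← Circle.exp_add]
    congr 1
    push_cast
    ring

lemma exists_root (a : ℕ) (ha : 0 < a) (z : Circle) : ∃ r : Circle, r ^ a = z := by
  refine ⟨Circle.exp (Complex.arg z / a), ?_⟩
  rw [circle_exp_pow, mul_div_cancel₀ _ (by exact_mod_cast ha.ne' : (a : ℝ) ≠ 0)]
  exact Circle.exp_arg z

lemma circleL_apply (a : ℕ) (ha : 0 < a) (g : Circle → ℂ) (r z : Circle) (hr : r ^ a = z) :
    circleL a g z
      = (a : ℂ)⁻¹ * ∑ i ∈ Finset.range a, g (r * Circle.exp (2 * Real.pi / a) ^ i) := by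
  set ζ : Circle := Circle.exp (2 * Real.pi / a) with hζ
  have hprim : IsPrimitiveRoot ((ζ : ℂ)) a := zeta_prim a ha
  have hζa : ζ ^ a = 1 := zeta_pow_a a ha
  haveI : NeZero a := ⟨ha.ne'⟩
  have hbij : Function.Bijective
      (fun i : Fin a => (⟨r * ζ ^ (i : ℕ), by
        rw [mul_pow, ← pow_mul, mul_comm (i : ℕ) a, pow_mul, hζa, one_pow, mul_one, hr]⟩ :
        {w : Circle // w ^ a = z})) := by
    constructor
    · intro i j hij
      have h1 : r * ζ ^ (i : ℕ) = r * ζ ^ (j : ℕ) := congrArg Subtype.val hij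
      have h2 : ζ ^ (i : ℕ) = ζ ^ (j : ℕ) := mul_left_cancel h1
      have h3 : ((ζ : ℂ)) ^ (i : ℕ) = ((ζ : ℂ)) ^ (j : ℕ) := by
        rw [← circle_coe_pow, ← circle_coe_pow, h2]
      exact Fin.ext (hprim.pow_inj i.isLt j.isLt h3)
    · rintro ⟨w, hw⟩
      have hu : ((w * r⁻¹ : Circle) : ℂ) ^ a = 1 := by
        have h : (w * r⁻¹ : Circle) ^ a = 1 := by
          rw [mul_pow, hw, inv_pow, hr, mul_inv_cancel]
        rw [← circle_coe_pow, h, Circle.coe_one]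
      obtain ⟨i, hia, hi⟩ := hprim.eq_pow_of_pow_eq_one hu
      refine ⟨⟨i, hia⟩, ?_⟩
      have h4 : (ζ ^ i : Circle) = w * r⁻¹ := by
        ext
        rw [circle_coe_pow]
        exact hi
      exact Subtype.ext
        (by simp only; rw [h4, mul_comm w, ← mul_assoc, mul_inv_cancel, one_mul])
  let e : Fin a ≃ {w : Circle // w ^ a = z} := Equiv.ofBijective _ hbij
  haveI : Fintype {w : Circle // w ^ a = z} := Fintype.ofEquiv (Fin a) e
  have hsum : ∑' w : {w : Circle // w ^ a = z}, g w.val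
      = ∑ i ∈ Finset.range a, g (r * ζ ^ i) := by
    rw [tsum_fintype, ← e.sum_comp (fun w => g w.val)]
    rw [← Fin.sum_univ_eq_sum_range (fun i => g (r * ζ ^ i)) a]
    rfl
  rw [circleL]
  rw [hsum]

lemma sum_pow_eq_zero {a : ℕ} {u : ℂ} (hu : u ^ a = 1) (hne : u ≠ 1) :
    ∑ i ∈ Finset.range a, u ^ i = 0 := by
  rw [geom_sum_eq hne, hu, sub_self, zero_div]

/-- For every positive integer `a`: (i) for `0 ≤ j, k < a` one has
`L_a(conj(ι^j)·ι^k) = 1` if `j = k` and `= 0` if `j ≠ k`; (ii) for every `f`,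
`∑_{k=0}^{a-1} ι^k · α_a(L_a(conj(ι^k)·f)) = f` (the reconstruction formula expressing that
`{ι^k : 0 ≤ k < a}` is an orthonormal basis for the bimodule with inner product
`⟨f,g⟩ = L_a(conj(f)·g)`). -/
theorem stmt10 (a : ℕ) (ha : 0 < a) :
    (∀ j k : ℕ, j < a → k < a →
      (j = k →
        circleL a (fun z : Circle => (starRingEnd ℂ) ((z : ℂ) ^ j) * (z : ℂ) ^ k) = 1) ∧
      (j ≠ k →
        circleL a (fun z : Circle => (starRingEnd ℂ) ((z : ℂ) ^ j) * (z : ℂ) ^ k) = 0)) ∧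
    (∀ f : Circle → ℂ,
      (∑ k ∈ Finset.range a,
        fun z : Circle => (z : ℂ) ^ k *
          circleAlpha a (circleL a (fun w : Circle => (starRingEnd ℂ) ((w : ℂ) ^ k) * f w)) z) = f) := by
  set ζ : Circle := Circle.exp (2 * Real.pi / a) with hζ
  have hprim : IsPrimitiveRoot ((ζ : ℂ)) a := zeta_prim a ha
  have hζa : ζ ^ a = 1 := zeta_pow_a a ha
  have hane : (a : ℂ) ≠ 0 := Nat.cast_ne_zero.mpr ha.ne'
  have hζinva : ((ζ⁻¹ : Circle) : ℂ) ^ a = 1 := by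
    rw [← circle_coe_pow, inv_pow, hζa, inv_one, Circle.coe_one]
  have hζca : ((ζ : Circle) : ℂ) ^ a = 1 := by
    rw [← circle_coe_pow, hζa, Circle.coe_one]
  have hconj : ∀ (w : Circle) (k : ℕ),
      (starRingEnd ℂ) ((w : ℂ) ^ k) = ((w⁻¹ : Circle) : ℂ) ^ k := by
    intro w k
    rw [map_pow, ← Circle.coe_inv_eq_conj]
  constructor
  · intro j k hj hk
    constructor
    · rintro rfl
      funext z
      obtain ⟨r, hr⟩ := exists_root a ha z
      rw [circleL_apply a ha _ r z hr]
      have hterm : ∀ i ∈ Finset.range a,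
          (starRingEnd ℂ) (((r * ζ ^ i : Circle) : ℂ) ^ j) * ((r * ζ ^ i : Circle) : ℂ) ^ j
            = 1 := by
        intro i _
        rw [hconj, ← mul_pow]
        have h2 : (((r * ζ ^ i)⁻¹ : Circle) : ℂ) * ((r * ζ ^ i : Circle) : ℂ) = 1 := by
          rw [← Circle.coe_mul, inv_mul_cancel, Circle.coe_one]
        rw [h2, one_pow]
      rw [Finset.sum_congr rfl hterm]
      simp only [Finset.sum_const, Finset.card_range, nsmul_eq_mul, mul_one, Pi.one_apply]
      exact inv_mul_cancel₀ hane
    · intro hjk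
      funext z
      obtain ⟨r, hr⟩ := exists_root a ha z
      rw [circleL_apply a ha _ r z hr]
      have hterm : ∀ i ∈ Finset.range a,
          (starRingEnd ℂ) (((r * ζ ^ i : Circle) : ℂ) ^ j) * ((r * ζ ^ i : Circle) : ℂ) ^ k
            = (((r⁻¹ : Circle) : ℂ) ^ j * (r : ℂ) ^ k)
              * (((ζ⁻¹ : Circle) : ℂ) ^ j * (ζ : ℂ) ^ k) ^ i := by
        intro i _
        rw [hconj]
        have h1 : ((r * ζ ^ i)⁻¹ : Circle) = r⁻¹ * (ζ⁻¹) ^ i := by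
          rw [mul_inv, inv_pow]
        rw [h1]
        push_cast [circle_coe_pow]
        ring
      rw [Finset.sum_congr rfl hterm, ← Finset.mul_sum]
      have hua : (((ζ⁻¹ : Circle) : ℂ) ^ j * (ζ : ℂ) ^ k) ^ a = 1 := by
        rw [mul_pow, ← pow_mul, ← pow_mul, mul_comm j a, mul_comm k a, pow_mul, pow_mul,
          hζinva, hζca, one_pow, one_pow, mul_one]
      have hune : ((ζ⁻¹ : Circle) : ℂ) ^ j * (ζ : ℂ) ^ k ≠ 1 := by
        intro h
        apply hjk
        rw [Circle.coe_inv, inv_pow] at h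
        have h2 := (inv_mul_eq_one₀ (pow_ne_zero j (Circle.coe_ne_zero ζ))).mp h
        exact hprim.pow_inj hj hk h2
      rw [sum_pow_eq_zero hua hune]
      simp
  · intro f
    funext z
    rw [Finset.sum_apply]
    have hα : ∀ k : ℕ,
        circleAlpha a (circleL a (fun w : Circle => (starRingEnd ℂ) ((w : ℂ) ^ k) * f w)) z
        = (a : ℂ)⁻¹ * ∑ i ∈ Finset.range a,
            (starRingEnd ℂ) (((z * ζ ^ i : Circle) : ℂ) ^ k) * f (z * ζ ^ i) := by
      intro k
      simp only [circleAlpha]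
      rw [circleL_apply a ha _ z (z ^ a) rfl]
    have key : ∀ (x : ℂ), x ≠ 0 → ∀ (y c : ℂ) (k : ℕ),
        x ^ k * ((x⁻¹ * y) ^ k * c) = y ^ k * c := by
      intro x hx y c k
      rw [mul_pow, ← mul_assoc, ← mul_assoc, ← mul_pow, mul_inv_cancel₀ hx, one_pow, one_mul]
    have hstep : ∀ k ∈ Finset.range a,
        (z : ℂ) ^ k *
          circleAlpha a (circleL a (fun w : Circle => (starRingEnd ℂ) ((w : ℂ) ^ k) * f w)) z
        = (a : ℂ)⁻¹ * ∑ i ∈ Finset.range a,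
            (((ζ⁻¹ : Circle) : ℂ) ^ i) ^ k * f (z * ζ ^ i) := by
      intro k _
      rw [hα k, ← mul_assoc, mul_comm ((z : ℂ) ^ k) ((a : ℂ)⁻¹), mul_assoc]
      congr 1
      rw [Finset.mul_sum]
      apply Finset.sum_congr rfl
      intro i _
      have h1 : ((z * ζ ^ i)⁻¹ : Circle) = z⁻¹ * (ζ⁻¹) ^ i := by rw [mul_inv, inv_pow]
      rw [hconj, h1]
      push_cast [circle_coe_pow]
      exact key (z : ℂ) (Circle.coe_ne_zero z) (((ζ : ℂ))⁻¹ ^ i) (f (z * ζ ^ i)) k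
    rw [Finset.sum_congr rfl hstep, ← Finset.mul_sum, Finset.sum_comm]
    have hinner : ∀ i ∈ Finset.range a,
        ∑ k ∈ Finset.range a, (((ζ⁻¹ : Circle) : ℂ) ^ i) ^ k * f (z * ζ ^ i)
        = (if i = 0 then (a : ℂ) * f (z * ζ ^ i) else 0) := by
      intro i hi
      rw [← Finset.sum_mul]
      by_cases hi0 : i = 0
      · subst hi0
        simp
      · have hune : ((ζ⁻¹ : Circle) : ℂ) ^ i ≠ 1 := by
          intro h
          apply hi0
          rw [Circle.coe_inv, inv_pow, inv_eq_one] at h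
          have := hprim.pow_inj (Finset.mem_range.mp hi) ha (by simpa using h)
          simpa using this
        have hua : (((ζ⁻¹ : Circle) : ℂ) ^ i) ^ a = 1 := by
          rw [← pow_mul, mul_comm i a, pow_mul, hζinva, one_pow]
        rw [sum_pow_eq_zero hua hune, zero_mul]
        simp [hi0]
    rw [Finset.sum_congr rfl hinner,
      Finset.sum_ite_eq' (Finset.range a) 0 (fun i => (a : ℂ) * f (z * ζ ^ i))]
    simp only [Finset.mem_range.mpr ha, if_true, pow_zero, mul_one]
    rw [← mul_assoc, inv_mul_cancel₀ hane, one_mul]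
end

section
/- Let a be a positive integer and let X be a bounded operator on ℓ²(ℕ) such that V_a* S^{(a−1)n} X* X S^{*(a−1)n} V_a = 0 for every nonnegative integer n. Then X = 0. (This expresses that the transfer operator K_a := V_a*(·)V_a is almost faithful.) -/
open ContinuousLinearMap

local notation "⟪" x ", " y "⟫_ℂ" => @inner ℂ _ _ x y

/-- On `ℓ²(ℕ)`, with `S` the unilateral shift and `V = V_a` given by
`V e_n = e_{an}` for a positive integer `a`: if a bounded operator `X` satisfies
`V* S^{(a-1)n} X* X S^{*(a-1)n} V = 0` for every `n ∈ ℕ`, then `X = 0` (the transfer operator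
`K_a = V*(·)V` is almost faithful). -/
theorem stmt16 {H : Type*} [NormedAddCommGroup H] [InnerProductSpace ℂ H] [CompleteSpace H]
    (e : HilbertBasis ℕ ℂ H) (S : H →L[ℂ] H) (hS : ∀ n, S (e n) = e (n + 1))
    (a : ℕ) (ha : 0 < a) (V : H →L[ℂ] H) (hV : ∀ n, V (e n) = e (a * n))
    (X : H →L[ℂ] H)
    (h : ∀ n : ℕ,
      adjoint V * (S ^ ((a - 1) * n) * (adjoint X * X) * (adjoint S) ^ ((a - 1) * n)) * V
        = 0) :
    X = 0 := by
  have ortho : ∀ j k : ℕ, ⟪e j, e k⟫_ℂ = if j = k then 1 else 0 :=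
    orthonormal_iff_ite.mp e.orthonormal
  -- extensionality via inner products with the basis
  have hext : ∀ x y : H, (∀ k, ⟪e k, x⟫_ℂ = ⟪e k, y⟫_ℂ) → x = y := by
    intro x y hxy
    apply e.repr.injective
    ext k
    simpa [e.repr_apply_apply] using hxy k
  -- adjoint S on basis vectors
  have hSadj : ∀ j : ℕ, adjoint S (e (j + 1)) = e j := by
    intro j
    apply hext
    intro k
    rw [adjoint_inner_right, hS k, ortho, ortho]
    simp
  -- powers of adjoint S
  have hSpow : ∀ m j : ℕ, ((adjoint S) ^ m) (e (j + m)) = e j := by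
    intro m
    induction m with
    | zero => intro j; simp
    | succ m ih =>
      intro j
      rw [pow_succ, mul_apply_eq_comp, show j + (m + 1) = (j + m) + 1 by omega, hSadj, ih]
  -- key vanishing
  have key : ∀ j : ℕ, X (((adjoint S) ^ ((a - 1) * j)) (V (e j))) = 0 := by
    intro j
    have h0 := congrFun (congrArg (DFunLike.coe) (h j)) (e j)
    have hpadj : (adjoint S) ^ ((a - 1) * j) = adjoint (S ^ ((a - 1) * j)) := by
      rw [← star_eq_adjoint, ← star_eq_adjoint, star_pow]
    have hinner :
        ⟪X (((adjoint S) ^ ((a - 1) * j)) (V (e j))),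
          X (((adjoint S) ^ ((a - 1) * j)) (V (e j)))⟫_ℂ = 0 := by
      have h1 := congrArg (fun z => ⟪z, e j⟫_ℂ) h0
      simp only [mul_apply_eq_comp, zero_apply, inner_zero_left] at h1
      rw [adjoint_inner_left, ← adjoint_inner_right (A := S ^ ((a - 1) * j)), ← hpadj,
        adjoint_inner_left] at h1
      exact h1
    exact inner_self_eq_zero.mp hinner
  -- conclude X (e j) = 0 for all j
  have hXe : ∀ j : ℕ, X (e j) = 0 := by
    intro j
    obtain ⟨b, rfl⟩ : ∃ b, a = b + 1 := ⟨a - 1, by omega⟩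
    have := key j
    rw [hV j] at this
    have hm : (b + 1) * j = j + (b + 1 - 1) * j := by
      simp only [Nat.add_sub_cancel]; ring
    rw [hm, hSpow] at this
    exact this
  have hd : Dense (Submodule.span ℂ (Set.range ⇑e) : Set H) :=
    Submodule.dense_iff_topologicalClosure_eq_top.mpr e.dense_span
  exact ContinuousLinearMap.ext_on hd (by rintro x ⟨k, rfl⟩; simp [hXe k])
end

section
/- Let A be a unital C*-algebra containing an isometry s and isometries v_p, one for each prime p, satisfying v_ps = s^pv_p for all primes p and v_pv_q = v_qv_p for all primes p, q. For a positive integer a set v_a := ∏_{p prime} v_p^{e_p(a)}, where e_p(a) is the exponent of p in the prime factorisation of a (the product is over the finitely many primes dividing a, in increasing order). Let J be the two-sided ideal of A generated by the set {1 − ∑_{k=0}^{p−1} s^kv_p(s^kv_p)* : p prime}. Then for every positive integer a, the element 1 − ∑_{k=0}^{a−1} s^kv_a(s^kv_a)* belongs to J. -/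
/-- Let `A` be a unital C*-algebra containing an isometry `s` and isometries
`v_p` (one for each prime `p`) satisfying (T1) `v_p s = s^p v_p` and (T2) `v_p v_q = v_q v_p`.
For a positive integer `a` let `v_a := ∏ v_p^{e_p(a)}` (encoded as the product of the list of
prime factors of `a` in increasing order with multiplicity, mapped through `v`).  If `J` is
the two-sided ideal of `A` generated by `{1 - ∑_{k=0}^{p-1} s^k v_p (s^k v_p)* : p prime}`,
then `1 - ∑_{k=0}^{a-1} s^k v_a (s^k v_a)* ∈ J` for every positive integer `a`. -/
theorem stmt17 {A : Type*} [NormedRing A] [StarRing A] [CStarRing A]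
    [NormedAlgebra ℂ A] [StarModule ℂ A] [CompleteSpace A]
    (s : A) (hs : star s * s = 1)
    (v : ℕ → A) (hv : ∀ p : ℕ, p.Prime → star (v p) * v p = 1)
    (hT1 : ∀ p : ℕ, p.Prime → v p * s = s ^ p * v p)
    (hT2 : ∀ p q : ℕ, p.Prime → q.Prime → v p * v q = v q * v p)
    (a : ℕ) (ha : 0 < a) :
    1 - ∑ k ∈ Finset.range a,
        s ^ k * ((a.primeFactorsList).map v).prod *
          star (s ^ k * ((a.primeFactorsList).map v).prod)
      ∈ TwoSidedIdeal.span
          {x : A | ∃ p : ℕ, p.Prime ∧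
            x = 1 - ∑ k ∈ Finset.range p, s ^ k * v p * star (s ^ k * v p)} := by
  set J := TwoSidedIdeal.span
      {x : A | ∃ p : ℕ, p.Prime ∧
        x = 1 - ∑ k ∈ Finset.range p, s ^ k * v p * star (s ^ k * v p)} with hJ
  have key : ∀ p : ℕ, p.Prime → ∀ j : ℕ, v p * s ^ j = s ^ (p * j) * v p := by
    intro p hp j
    induction j with
    | zero => simp
    | succ j ih =>
      rw [pow_succ, ← mul_assoc, ih, mul_assoc, hT1 p hp, ← mul_assoc, ← pow_add,
        ← Nat.mul_succ]
  revert ha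
  induction a using Nat.strong_induction_on with
  | _ a ih =>
  intro ha
  rcases eq_or_lt_of_le (show 1 ≤ a from ha) with h1 | h2
  · -- a = 1
    rw [← h1]
    simpa using J.zero_mem
  · -- a ≥ 2
    have hane : a ≠ 1 := by omega
    have hp : (a.minFac).Prime := Nat.minFac_prime hane
    set p := a.minFac with hpdef
    set b := a / p with hbdef
    have hab : p * b = a := Nat.mul_div_cancel' a.minFac_dvd
    have hp0 : 0 < p := hp.pos
    have hb0 : 0 < b := Nat.div_pos (Nat.minFac_le ha) hp0
    have hblt : b < a := Nat.div_lt_self ha hp.one_lt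
    -- abbreviations
    set W := ((a.primeFactorsList).map v).prod with hW
    set Wb := ((b.primeFactorsList).map v).prod with hWb
    -- the elements v p pairwise commute along the factor list
    have hcomm : (a.primeFactorsList.map v).Pairwise Commute := by
      refine List.pairwise_of_forall_mem_list ?_
      intro x hx y hy
      simp only [List.mem_map] at hx hy
      obtain ⟨px, hpx, rfl⟩ := hx
      obtain ⟨py, hpy, rfl⟩ := hy
      exact hT2 px py (Nat.prime_of_mem_primeFactorsList hpx)
        (Nat.prime_of_mem_primeFactorsList hpy)
    have hWsplit : W = v p * Wb := by
      have hperm : a.primeFactorsList.Perm (p :: b.primeFactorsList) := by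
        have h1 : (p * b).primeFactorsList.Perm
            (p.primeFactorsList ++ b.primeFactorsList) :=
          Nat.perm_primeFactorsList_mul (by omega) (by omega)
        rw [hab] at h1
        rwa [Nat.primeFactorsList_prime hp] at h1
      calc W = (((p :: b.primeFactorsList)).map v).prod :=
            (hperm.map v).prod_eq' hcomm
        _ = v p * Wb := by rw [List.map_cons, List.prod_cons]
    -- reindexing the sum
    have reindex : ∀ g : ℕ → A, ∑ k ∈ Finset.range (p * b), g k
        = ∑ x ∈ Finset.range p ×ˢ Finset.range b, g (x.1 + p * x.2) := by
      intro g
      refine (Finset.sum_nbij' (i := fun x : ℕ × ℕ => x.1 + p * x.2)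
        (j := fun k => (k % p, k / p)) ?_ ?_ ?_ ?_ ?_).symm
      · intro x hx
        simp only [Finset.mem_product, Finset.mem_range] at hx
        simp only [Finset.mem_range]
        calc x.1 + p * x.2 < p * x.2 + p := by omega
          _ = p * (x.2 + 1) := by ring
          _ ≤ p * b := Nat.mul_le_mul_left _ (by omega)
      · intro k hk
        simp only [Finset.mem_range] at hk
        simp only [Finset.mem_product, Finset.mem_range]
        constructor
        · exact Nat.mod_lt _ hp0
        · exact Nat.div_lt_of_lt_mul (by omega)
      · intro x hx
        simp only [Finset.mem_product, Finset.mem_range] at hx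
        have h1 : (x.1 + p * x.2) % p = x.1 := by
          rw [Nat.add_mul_mod_self_left, Nat.mod_eq_of_lt hx.1]
        have h2 : (x.1 + p * x.2) / p = x.2 := by
          rw [Nat.add_mul_div_left _ _ hp0, Nat.div_eq_of_lt hx.1, Nat.zero_add]
        simp [h1, h2]
      · intro k hk
        simp [Nat.mod_add_div]
      · intro x hx
        rfl
    -- the basic relation on summands
    have hX : ∀ i j : ℕ, s ^ (i + p * j) * (v p * Wb) = s ^ i * v p * (s ^ j * Wb) := by
      intro i j
      rw [pow_add, mul_assoc (s ^ i), ← mul_assoc (s ^ (p * j)), ← key p hp j]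
      simp only [mul_assoc]
    have hterm : ∀ i j : ℕ, s ^ (i + p * j) * W * star (s ^ (i + p * j) * W)
        = s ^ i * v p * ((s ^ j * Wb) * star (s ^ j * Wb)) * star (s ^ i * v p) := by
      intro i j
      rw [hWsplit, hX, star_mul]
      simp only [mul_assoc]
    -- inner expansion
    set Sb := ∑ j ∈ Finset.range b, s ^ j * Wb * star (s ^ j * Wb) with hSb
    have inner : ∀ i : ℕ, s ^ i * v p * (1 - Sb) * star (s ^ i * v p)
        = s ^ i * v p * star (s ^ i * v p)
          - ∑ j ∈ Finset.range b,
              s ^ i * v p * ((s ^ j * Wb) * star (s ^ j * Wb)) * star (s ^ i * v p) := by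
      intro i
      rw [mul_sub, mul_one, sub_mul, hSb, Finset.mul_sum, Finset.sum_mul]
    -- main decomposition
    have heq : 1 - ∑ k ∈ Finset.range a, s ^ k * W * star (s ^ k * W)
        = (1 - ∑ k ∈ Finset.range p, s ^ k * v p * star (s ^ k * v p))
          + ∑ i ∈ Finset.range p, s ^ i * v p * (1 - Sb) * star (s ^ i * v p) := by
      have hsum : ∑ k ∈ Finset.range a, s ^ k * W * star (s ^ k * W)
          = ∑ i ∈ Finset.range p, ∑ j ∈ Finset.range b,
              s ^ i * v p * ((s ^ j * Wb) * star (s ^ j * Wb)) * star (s ^ i * v p) := by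
        rw [← hab, reindex (fun k => s ^ k * W * star (s ^ k * W)),
          Finset.sum_product]
        exact Finset.sum_congr rfl fun i _ => Finset.sum_congr rfl fun j _ => hterm i j
      rw [hsum]
      rw [Finset.sum_congr rfl fun i _ => inner i, Finset.sum_sub_distrib]
      abel
    rw [heq]
    refine J.add_mem ?_ ?_
    · exact TwoSidedIdeal.subset_span ⟨p, hp, rfl⟩
    · refine J.finsetSum_mem _ _ fun i _ => ?_
      exact J.mul_mem_right _ _ (J.mul_mem_left _ _ (ih b hblt hb0))
end
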